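/- Let G be a finite abelian group, m > 1, and γ_1,...,γ_m the automorphisms of G^m defined by (g_1,...,g_m)^{γ_i} = (g_1,...,g_{i-1}, g_{i-1} g_i^{-1} g_{i+1}, g_{i+1},...,g_m) (g_0 = g_{m+1} = e). Then γ_i γ_j = γ_j γ_i whenever |i−j| > 1, and (γ_i γ_{i+1})^3 = id for 1 ≤ i ≤ m−1. Consequently, if |G| > 2 the subgroup generated by γ_1,...,γ_m is isomorphic to the symmetric group S_{m+1}. -/

import Mathlib

/-!
Write `g₀ = g_{m+1} = 1` and pass to the coordinates `y_k = g_k⁻¹ g_{k+1}` (`0 ≤ k ≤ m`). They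
identify `G^m` with the tuples in `G^{m+1}` of product `1`, the inverse map taking partial
products, and in these coordinates `γ_i` just swaps `y_{i-1}` and `y_i`. So `γ_i` is the image of
the transposition `(i-1 i)` under the representation of `S_{m+1}` permuting the coordinates `y_k`,
and the relations are those of the transpositions. For `m ≥ 2` and `G` nontrivial this
representation is faithful: a permutation moving `l` moves the tuple with `u ≠ 1` at `l`, `u⁻¹` at
some third place and `1` elsewhere.
-/

namespace CayleyStmt16

variable {G : Type*}

def coord [Group G] (m : ℕ) (g : Fin m → G) (p : ℕ) : G :=
  if h : 1 ≤ p ∧ p ≤ m then g ⟨p - 1, by omega⟩ else 1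

def gam [Group G] (m i : ℕ) (g : Fin m → G) : Fin m → G :=
  fun j => if j.1 + 1 = i then coord m g (i - 1) * (coord m g i)⁻¹ * coord m g (i + 1)
    else g j

open Equiv

lemma _root_.Fin.partialProd_last {M : Type*} [CommMonoid M] {n : ℕ} (f : Fin n → M) :
    Fin.partialProd f (Fin.last n) = ∏ k, f k := by
  rw [Fin.partialProd, Fin.val_last, List.take_of_length_le (List.length_ofFn ..).le,
    List.prod_ofFn]

lemma _root_.Equiv.swap_mul_swap_pow_three {α : Type*} [DecidableEq α] [Fintype α] {a b c : α}
    (hab : a ≠ b) (hac : a ≠ c) (hbc : b ≠ c) : (swap a b * swap b c) ^ 3 = 1 := by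
  rw [swap_comm a b, ← (Perm.isThreeCycle_swap_mul_swap_same hab.symm hbc hac).orderOf]
  exact pow_orderOf_eq_one _

section PermuteProdOne
variable (ι : Type*) (G) [Fintype ι] [CommGroup G]

def permuteProdOne : Perm ι →* Perm {y : ι → G // ∏ i, y i = 1} where
  toFun σ := (σ.arrowCongr (Equiv.refl G)).subtypeEquiv fun y => by
    change _ ↔ ∏ i, y (σ.symm i) = 1
    rw [Equiv.prod_comp]
  map_one' := rfl
  map_mul' _ _ := rfl

variable {ι G}

lemma permuteProdOne_apply (σ : Perm ι) (y : {y : ι → G // ∏ i, y i = 1}) :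
    (permuteProdOne G ι σ y).1 = y.1 ∘ σ.symm := rfl

lemma permuteProdOne_injective [Nontrivial G] (hι : 2 < Fintype.card ι) :
    Function.Injective (permuteProdOne G ι) := by
  classical
  refine (injective_iff_map_eq_one _).2 fun σ hσ => Equiv.ext fun l => ?_
  by_contra hl
  obtain ⟨u, hu⟩ := exists_ne (1 : G)
  obtain ⟨c, -, hc⟩ := Finset.exists_mem_notMem_of_card_lt_card
    ((Finset.card_le_two (a := l) (b := σ l)).trans_lt (by rwa [Finset.card_univ]))
  rw [Finset.mem_insert, Finset.mem_singleton, not_or] at hc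
  let y : {y : ι → G // ∏ i, y i = 1} :=
    ⟨Pi.mulSingle l u / Pi.mulSingle c u, by simp [Finset.prod_div_distrib]⟩
  have hy : σ l ≠ l → u = 1 := by
    simpa [permuteProdOne_apply, y, Pi.mulSingle_apply, Ne.symm hc.1, Ne.symm hc.2] using
      congrArg (fun z => z.1 (σ l)) (DFunLike.congr_fun hσ y)
  exact hu (hy hl)

end PermuteProdOne

section Group
variable [Group G] {m : ℕ}

lemma coord_of_mem (g : Fin m → G) {p : ℕ} (hp : 1 ≤ p ∧ p ≤ m) :
    coord m g p = g ⟨p - 1, by omega⟩ := dif_pos hp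

lemma coord_of_notMem (g : Fin m → G) {p : ℕ} (hp : ¬(1 ≤ p ∧ p ≤ m)) : coord m g p = 1 :=
  dif_neg hp

lemma coord_gam (g : Fin m → G) {i : ℕ} (h1 : 1 ≤ i) (h2 : i ≤ m) (p : ℕ) :
    coord m (gam m i g) p =
      if p = i then coord m g (i - 1) * (coord m g i)⁻¹ * coord m g (i + 1) else coord m g p := by
  by_cases hp : 1 ≤ p ∧ p ≤ m
  · rw [coord_of_mem _ hp, coord_of_mem _ hp]
    exact if_congr (by dsimp only; omega) rfl rfl
  · rw [coord_of_notMem _ hp, coord_of_notMem _ hp, if_neg (by omega)]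

def coordDiff (m : ℕ) (g : Fin m → G) (k : Fin (m + 1)) : G :=
  (coord m g k)⁻¹ * coord m g (k + 1)

lemma partialProd_coordDiff (g : Fin m → G) (p : Fin (m + 2)) :
    Fin.partialProd (coordDiff m g) p = coord m g p := by
  have h := congrFun (Fin.partialProd_left_inv fun p : Fin (m + 2) => coord m g p) p
  rwa [Fin.val_zero, coord_of_notMem _ (by omega), one_smul] at h

end Group

section CommGroup
variable [CommGroup G] {m : ℕ}

lemma prod_coordDiff (g : Fin m → G) : ∏ k, coordDiff m g k = 1 := by
  rw [← Fin.partialProd_last, partialProd_coordDiff, Fin.val_last, coord_of_notMem _ (by omega)]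

lemma coordDiff_gam (g : Fin m → G) (k : Fin m) :
    coordDiff m (gam m (k + 1) g) = coordDiff m g ∘ swap k.castSucc k.succ := by
  ext l
  simp only [coordDiff, coord_gam g (Nat.le_add_left 1 k) k.isLt, Function.comp_apply,
    swap_apply_def, Fin.ext_iff, Fin.val_castSucc, Fin.val_succ, Nat.add_sub_cancel]
  split_ifs <;> try omega
  · rw [‹(l : ℕ) = k + 1›, Fin.val_castSucc, mul_inv, inv_mul_cancel_right, mul_inv, inv_inv]
  · rw [‹(l : ℕ) = k›, Fin.val_succ, mul_assoc, inv_mul_cancel_left]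
  · rfl

lemma coord_partialProd {y : Fin (m + 1) → G} (hy : ∏ k, y k = 1) (p : Fin (m + 2)) :
    coord m (fun j => Fin.partialProd y j.succ.castSucc) p = Fin.partialProd y p := by
  induction p using Fin.lastCases with
  | last => rw [Fin.val_last, coord_of_notMem _ (by omega), Fin.partialProd_last, hy]
  | cast q =>
    induction q using Fin.cases with
    | zero =>
      rw [Fin.castSucc_zero, Fin.val_zero, Fin.partialProd_zero, coord_of_notMem _ (by omega)]
    | succ j => exact coord_of_mem _ (by simp)

def coordDiffEquiv (m : ℕ) : (Fin m → G) ≃ {y : Fin (m + 1) → G // ∏ k, y k = 1} where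
  toFun g := ⟨coordDiff m g, prod_coordDiff g⟩
  invFun y j := Fin.partialProd y.1 j.succ.castSucc
  left_inv g := funext fun j => by
    change Fin.partialProd (coordDiff m g) j.succ.castSucc = g j
    rw [partialProd_coordDiff]
    exact coord_of_mem g (by simp)
  right_inv y := Subtype.ext <| funext fun k => by
    have h₀ := coord_partialProd y.2 k.castSucc
    have h₁ := coord_partialProd y.2 k.succ
    rw [Fin.val_castSucc] at h₀
    rw [Fin.val_succ] at h₁
    change (coord m _ k)⁻¹ * coord m _ (k + 1) = y.1 k
    rw [h₀, h₁, Fin.partialProd_right_inv]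

variable (G) in
def gamRep (m : ℕ) : Perm (Fin (m + 1)) →* Perm (Fin m → G) :=
  (coordDiffEquiv m).symm.permCongrHom.toMonoidHom.comp (permuteProdOne G (Fin (m + 1)))

lemma coe_gamRep_swap (k : Fin m) :
    ⇑(gamRep G m (swap k.castSucc k.succ)) = gam m (k + 1) := by
  funext g
  apply (coordDiffEquiv m).injective
  simp only [gamRep, MonoidHom.coe_comp, Function.comp_apply, MulEquiv.coe_toMonoidHom,
    permCongrHom_coe, permCongr_apply, symm_symm, apply_symm_apply]
  refine Subtype.ext ?_
  rw [permuteProdOne_apply, symm_swap]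
  exact (coordDiff_gam g k).symm

lemma gamRep_injective [Nontrivial G] (hm : 1 < m) : Function.Injective (gamRep G m) :=
  (coordDiffEquiv m).symm.permCongrHom.injective.comp
    (permuteProdOne_injective (by rw [Fintype.card_fin]; omega))

end CommGroup

/-- For abelian `G`: the `γ_i` satisfy the Coxeter relations of `S_{m+1}`
(`γ_iγ_j = γ_jγ_i` for `|i−j| > 1`, `(γ_iγ_{i+1})³ = id`), and consequently,
when `|G| > 2`, the subgroup of permutations of `G^m` they generate is
isomorphic to the symmetric group `S_{m+1}`, via an injective homomorphism
sending the transposition `σ_i = (i, i+1)` to `γ_i`. -/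
theorem gam_relations_and_symmetric_group [CommGroup G] [Fintype G]
    (m : ℕ) (hm : 1 < m) :
    (∀ i j : ℕ, 1 ≤ i → i ≤ m → 1 ≤ j → j ≤ m → (i + 1 < j ∨ j + 1 < i) →
      (gam m i (G := G)) ∘ gam m j = gam m j ∘ gam m i) ∧
    (∀ i : ℕ, 1 ≤ i → i + 1 ≤ m →
      ((gam m i (G := G)) ∘ gam m (i + 1)) ∘ ((gam m i) ∘ gam m (i + 1)) ∘
        ((gam m i) ∘ gam m (i + 1)) = id) ∧
    (2 < Fintype.card G →
      ∃ ρ : Equiv.Perm (Fin (m + 1)) →* Equiv.Perm (Fin m → G),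
        Function.Injective ρ ∧
        ∀ i : ℕ, ∀ h1 : 1 ≤ i, ∀ h2 : i ≤ m,
          ⇑(ρ (Equiv.swap (⟨i - 1, by omega⟩ : Fin (m + 1)) ⟨i, by omega⟩)) =
            gam m i (G := G)) := by
  have hγ : ∀ i (h1 : 1 ≤ i) (h2 : i ≤ m),
      ⇑(gamRep G m (swap (⟨i - 1, by omega⟩ : Fin (m + 1)) ⟨i, by omega⟩)) = gam m i := by
    intro i h1 h2
    obtain ⟨k, rfl⟩ : ∃ k : Fin m, i = k + 1 := ⟨⟨i - 1, by omega⟩, by simp only; omega⟩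
    exact coe_gamRep_swap k
  refine ⟨fun i j hi1 hi2 hj1 hj2 hij => ?_, fun i hi1 hi2 => ?_, fun hG => ?_⟩
  · have hdisj := Perm.disjoint_swap_swap (α := Fin (m + 1))
      (x := ⟨i - 1, by omega⟩) (y := ⟨i, by omega⟩) (z := ⟨j - 1, by omega⟩) (t := ⟨j, by omega⟩)
      (by simp [Fin.ext_iff]; omega)
    rw [← hγ i hi1 hi2, ← hγ j hj1 hj2, ← Perm.coe_mul, ← Perm.coe_mul, ← map_mul, ← map_mul,
      hdisj.commute.eq]
  · have hcube := swap_mul_swap_pow_three (a := (⟨i - 1, by omega⟩ : Fin (m + 1)))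
      (b := ⟨i, by omega⟩) (c := ⟨i + 1, by omega⟩)
      (by simp [Fin.ext_iff]; omega) (by simp [Fin.ext_iff]) (by simp [Fin.ext_iff])
    rw [← hγ i hi1 (by omega), ← hγ (i + 1) (by omega) hi2, ← Perm.coe_mul, ← Perm.coe_mul,
      ← Perm.coe_mul, ← map_mul, ← map_mul, ← map_mul, ← pow_three]
    simp only [Nat.add_sub_cancel]
    rw [hcube, map_one, Perm.coe_one]
  · have : Nontrivial G := Fintype.one_lt_card_iff_nontrivial.mp (by omega)
    exact ⟨gamRep G m, gamRep_injective hm, hγ⟩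

end CayleyStmt16
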